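/- Let V be a real Hilbert space with inner product A, V_h ⊆ V a closed subspace, u, u_h as in Galerkin orthogonality, and suppose φ ∈ V satisfies A(v, φ) = ⟨e, v⟩ for all v ∈ V, where e = u - u_h and ⟨·,·⟩ is a continuous bilinear pairing with ⟨e,e⟩ = ‖e‖_*^2 for some norm ‖·‖_*. Then for any w ∈ V_h, ‖e‖_*^2 ≤ |||e||| · |||φ - w|||. -/
import Mathlib

open RealInnerProductSpace

/-- Aubin–Nitsche duality argument: with Galerkin orthogonality for `e = u - u_h`,
a dual solution `φ` with `A(v, φ) = ⟨e, v⟩` for all `v`, where `⟨·,·⟩` is a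
continuous bilinear pairing with `⟨e, e⟩ = ‖e‖_*²`, one gets
`‖e‖_*² ≤ |||e||| · |||φ - w|||` for any `w ∈ V_h`. -/
theorem aubin_nitsche {V : Type*} [NormedAddCommGroup V] [InnerProductSpace ℝ V]
    (Vh : Submodule ℝ V) (hclosed : IsClosed (Vh : Set V))
    (u uh : V) (huh : uh ∈ Vh)
    (hGalerkin : ∀ v ∈ Vh, ⟪u - uh, v⟫ = 0)
    (B : V →L[ℝ] V →L[ℝ] ℝ) (ns : V → ℝ) (hns : 0 ≤ ns (u - uh))
    (hpairing : B (u - uh) (u - uh) = (ns (u - uh)) ^ 2)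
    (φ : V) (hdual : ∀ v : V, ⟪v, φ⟫ = B (u - uh) v) :
    ∀ w ∈ Vh, (ns (u - uh)) ^ 2 ≤ ‖u - uh‖ * ‖φ - w‖ := by
  intro w hw
  have h1 : (ns (u - uh)) ^ 2 = ⟪u - uh, φ - w⟫ := by
    rw [inner_sub_right, hdual, hGalerkin w hw, hpairing, sub_zero]
  rw [h1]
  exact real_inner_le_norm _ _
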